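/- arXiv:2201.05960 — 2 statements merged into one kernel-verified Lean document; each statement's English description precedes it below -/
import Mathlib

section
/- Let 0 ≤ r1 ≤ r2 with r2 > 1, and let 0 ≤ θ < 1. Then there exists a constant C = C(r1, r2) such that for all t ≥ 0, ∫₀ᵗ (1+t−τ)^(−r1) τ^(−θ) (1+τ)^(θ−r2) dτ ≤ C (1+t)^(−r1). -/
open MeasureTheory

private lemma div_rpow_eq {x c : ℝ} (e : ℝ) (hx : 0 ≤ x) (hc : 0 < c) :
    (x / c) ^ e = c ^ (-e) * x ^ e := by
  rw [Real.div_rpow hx hc.le, div_eq_inv_mul, Real.rpow_neg hc.le]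

private lemma div_neg_le {X Y c c' : ℝ} (hc : 0 < c') (hcc : c = -c') (hX : 0 ≤ X)
    (hY : Y ≤ 1) : (X - Y) / c ≤ 1 / c' := by
  subst hcc
  rw [div_neg, ← neg_div, neg_sub]
  exact (div_le_div_iff_of_pos_right hc).mpr (by linarith)

private lemma aux_integrable {r1 r2 θ t a b : ℝ} (hr1 : 0 ≤ r1) (hθr2 : θ ≤ r2)
    (hθ1 : θ < 1) (h0a : 0 ≤ a) (hab : a ≤ b) (hbt : b ≤ t) :
    IntervalIntegrable (fun τ => (1 + t - τ) ^ (-r1) * τ ^ (-θ) * (1 + τ) ^ (θ - r2))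
      volume a b := by
  have hg : IntervalIntegrable (fun τ : ℝ => τ ^ (-θ)) volume a b :=
    intervalIntegral.intervalIntegrable_rpow' (by linarith)
  refine hg.mono_fun ?_ ?_
  · apply Measurable.aestronglyMeasurable
    fun_prop
  · filter_upwards [ae_restrict_mem measurableSet_uIoc] with τ hτ
    rw [Set.uIoc_of_le hab] at hτ
    have hτ0 : 0 < τ := lt_of_le_of_lt h0a hτ.1
    have hτt : τ ≤ t := le_trans hτ.2 hbt
    have h1 : (1 + t - τ) ^ (-r1) ≤ 1 :=
      Real.rpow_le_one_of_one_le_of_nonpos (by linarith) (by linarith)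
    have h2 : (1 + τ) ^ (θ - r2) ≤ 1 :=
      Real.rpow_le_one_of_one_le_of_nonpos (by linarith) (by linarith)
    have h1' : (0:ℝ) ≤ (1 + t - τ) ^ (-r1) := Real.rpow_nonneg (by linarith) _
    have h2' : (0:ℝ) ≤ (1 + τ) ^ (θ - r2) := Real.rpow_nonneg (by linarith) _
    have h3 : (0:ℝ) ≤ τ ^ (-θ) := Real.rpow_nonneg hτ0.le _
    simp only [Real.norm_eq_abs]
    rw [abs_of_nonneg (by positivity), abs_of_nonneg h3]
    calc (1 + t - τ) ^ (-r1) * τ ^ (-θ) * (1 + τ) ^ (θ - r2)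
        ≤ 1 * τ ^ (-θ) * 1 :=
          mul_le_mul (mul_le_mul h1 le_rfl h3 zero_le_one) h2 h2' (by positivity)
      _ = τ ^ (-θ) := by ring

/-- The pointwise bound `f τ ≤ τ^(-θ)` for `0 ≤ τ ≤ t`. -/
private lemma aux_ptwise {r1 r2 θ t τ : ℝ} (hr1 : 0 ≤ r1) (hθr2 : θ ≤ r2)
    (hτ0 : 0 ≤ τ) (hτt : τ ≤ t) :
    (1 + t - τ) ^ (-r1) * τ ^ (-θ) * (1 + τ) ^ (θ - r2) ≤ τ ^ (-θ) := by
  have h1 : (1 + t - τ) ^ (-r1) ≤ 1 :=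
    Real.rpow_le_one_of_one_le_of_nonpos (by linarith) (by linarith)
  have h2 : (1 + τ) ^ (θ - r2) ≤ 1 :=
    Real.rpow_le_one_of_one_le_of_nonpos (by linarith) (by linarith)
  have h2' : (0:ℝ) ≤ (1 + τ) ^ (θ - r2) := Real.rpow_nonneg (by linarith) _
  have h3 : (0:ℝ) ≤ τ ^ (-θ) := Real.rpow_nonneg hτ0 _
  calc (1 + t - τ) ^ (-r1) * τ ^ (-θ) * (1 + τ) ^ (θ - r2)
      ≤ 1 * τ ^ (-θ) * 1 :=
        mul_le_mul (mul_le_mul h1 le_rfl h3 zero_le_one) h2 h2' (by positivity)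
    _ = τ ^ (-θ) := by ring

set_option maxHeartbeats 2000000 in
theorem decay_with_singularity (r1 r2 θ : ℝ) (hr1 : 0 ≤ r1) (hr12 : r1 ≤ r2)
    (hr2 : 1 < r2) (hθ0 : 0 ≤ θ) (hθ1 : θ < 1) :
    ∃ C : ℝ, ∀ t : ℝ, 0 ≤ t →
      ∫ τ in (0:ℝ)..t, (1 + t - τ) ^ (-r1) * τ ^ (-θ) * (1 + τ) ^ (θ - r2) ≤
        C * (1 + t) ^ (-r1) := by
  have h1θ : (0:ℝ) < 1 - θ := by linarith
  have hr21 : (0:ℝ) < r2 - 1 := by linarith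
  have hθr2 : θ ≤ r2 := by linarith
  refine ⟨(3:ℝ) ^ r1 * (2 / (1 - θ)) + (2:ℝ) ^ r1 * (1 / (1 - θ) + 2 / (r2 - 1))
    + 6 * (2:ℝ) ^ r2 / (r2 - 1), ?_⟩
  intro t ht
  have h1t : (0:ℝ) < 1 + t := by linarith
  have hpos : (0:ℝ) < (1 + t) ^ (-r1) := Real.rpow_pos_of_pos h1t _
  have hC1 : (0:ℝ) ≤ (3:ℝ) ^ r1 * (2 / (1 - θ)) := by positivity
  have hC2 : (0:ℝ) ≤ (2:ℝ) ^ r1 * (1 / (1 - θ) + 2 / (r2 - 1)) := by positivity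
  have hC3 : (0:ℝ) ≤ 6 * (2:ℝ) ^ r2 / (r2 - 1) := by positivity
  rcases le_or_gt t 2 with h2 | h2
  · -- small times : t ≤ 2
    have hint : (∫ τ in (0:ℝ)..t, (1 + t - τ) ^ (-r1) * τ ^ (-θ) * (1 + τ) ^ (θ - r2)) ≤
        ∫ τ in (0:ℝ)..t, τ ^ (-θ) := by
      refine intervalIntegral.integral_mono_on ht
        (aux_integrable hr1 hθr2 hθ1 le_rfl ht le_rfl)
        (intervalIntegral.intervalIntegrable_rpow' (by linarith)) ?_
      intro τ hτ
      exact aux_ptwise hr1 hθr2 hτ.1 hτ.2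
    have hval : (∫ τ in (0:ℝ)..t, τ ^ (-θ)) = (t ^ (-θ + 1) - (0:ℝ) ^ (-θ + 1)) / (-θ + 1) :=
      integral_rpow (Or.inl (by linarith))
    have hz : ((0:ℝ)) ^ (-θ + 1) = 0 := Real.zero_rpow (by linarith)
    have hb : t ^ (-θ + 1) ≤ 2 := by
      calc t ^ (-θ + 1) ≤ (2:ℝ) ^ (-θ + 1) := Real.rpow_le_rpow ht h2 (by linarith)
        _ ≤ (2:ℝ) ^ (1:ℝ) := Real.rpow_le_rpow_of_exponent_le one_le_two (by linarith)
        _ = 2 := Real.rpow_one 2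
    have hI : (∫ τ in (0:ℝ)..t, (1 + t - τ) ^ (-r1) * τ ^ (-θ) * (1 + τ) ^ (θ - r2)) ≤
        2 / (1 - θ) := by
      rw [hval, hz] at hint
      have : (t ^ (-θ + 1) - 0) / (-θ + 1) ≤ 2 / (1 - θ) := by
        rw [sub_zero, show -θ + 1 = 1 - θ by ring]
        exact (div_le_div_iff_of_pos_right h1θ).mpr (by rw [show (1:ℝ)-θ = -θ+1 by ring]; exact hb)
      linarith
    -- RHS lower bound
    have h3 : (3:ℝ) ^ (-r1) ≤ (1 + t) ^ (-r1) :=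
      Real.rpow_le_rpow_of_nonpos h1t (by linarith) (by linarith)
    have h33 : (3:ℝ) ^ r1 * (3:ℝ) ^ (-r1) = 1 := by
      rw [← Real.rpow_add (by norm_num)]; norm_num
    have key : 2 / (1 - θ) ≤ ((3:ℝ) ^ r1 * (2 / (1 - θ))) * (1 + t) ^ (-r1) := by
      have e1 : ((3:ℝ) ^ r1 * (2 / (1 - θ))) * (3:ℝ) ^ (-r1) = 2 / (1 - θ) := by
        calc ((3:ℝ) ^ r1 * (2 / (1 - θ))) * (3:ℝ) ^ (-r1)
            = ((3:ℝ) ^ r1 * (3:ℝ) ^ (-r1)) * (2 / (1 - θ)) := by ring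
          _ = 2 / (1 - θ) := by rw [h33, one_mul]
      calc 2 / (1 - θ) = ((3:ℝ) ^ r1 * (2 / (1 - θ))) * (3:ℝ) ^ (-r1) := e1.symm
        _ ≤ ((3:ℝ) ^ r1 * (2 / (1 - θ))) * (1 + t) ^ (-r1) :=
            mul_le_mul_of_nonneg_left h3 hC1
    nlinarith [mul_nonneg hC2 hpos.le, mul_nonneg hC3 hpos.le]
  · -- large times : t > 2
    have ht2 : (1:ℝ) ≤ t / 2 := by linarith
    have ht20 : (0:ℝ) ≤ t / 2 := by linarith
    have ht0 : (0:ℝ) < t / 2 := by linarith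
    have htt : t / 2 ≤ t := by linarith
    set f : ℝ → ℝ := fun τ => (1 + t - τ) ^ (-r1) * τ ^ (-θ) * (1 + τ) ^ (θ - r2) with hfdef
    have hi1 : IntervalIntegrable f volume 0 (t/2) := aux_integrable hr1 hθr2 hθ1 le_rfl ht20 htt
    have hi2 : IntervalIntegrable f volume (t/2) t := aux_integrable hr1 hθr2 hθ1 ht20 htt le_rfl
    rw [← intervalIntegral.integral_add_adjacent_intervals hi1 hi2]
    set g : ℝ → ℝ := fun τ => τ ^ (-θ) * (1 + τ) ^ (θ - r2) with hgdef
    have hgint : ∀ a b : ℝ, 0 ≤ a → a ≤ b → b ≤ t → IntervalIntegrable g volume a b := by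
      intro a b h0a hab hbt
      have := aux_integrable (r1 := 0) (r2 := r2) (θ := θ) (t := t) le_rfl hθr2 hθ1 h0a hab hbt
      simpa [neg_zero, Real.rpow_zero, one_mul] using this
    have hgnn : ∀ τ : ℝ, 0 ≤ τ → 0 ≤ g τ := by
      intro τ h
      exact mul_nonneg (Real.rpow_nonneg h _) (Real.rpow_nonneg (by linarith) _)
    -- Part 1 : integral over [0, t/2]
    have c1eq : ((1 + t)/2) ^ (-r1) = 2 ^ r1 * (1 + t) ^ (-r1) := by
      rw [div_rpow_eq (-r1) h1t.le (by norm_num : (0:ℝ) < 2), neg_neg]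
    have key1 : (∫ τ in (0:ℝ)..(t/2), f τ) ≤
        (2 ^ r1 * (1 + t) ^ (-r1)) * ∫ τ in (0:ℝ)..(t/2), g τ := by
      rw [← intervalIntegral.integral_const_mul]
      refine intervalIntegral.integral_mono_on ht20 hi1
        ((hgint 0 (t/2) le_rfl ht20 htt).const_mul _) ?_
      intro τ hτ
      obtain ⟨hτ0, hτt2⟩ := hτ
      have h1 : (1 + t - τ) ^ (-r1) ≤ ((1 + t)/2) ^ (-r1) :=
        Real.rpow_le_rpow_of_nonpos (by linarith) (by linarith) (by linarith)
      calc f τ = (1 + t - τ) ^ (-r1) * g τ := by simp only [hfdef, hgdef]; ring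
        _ ≤ (2 ^ r1 * (1 + t) ^ (-r1)) * g τ :=
            mul_le_mul_of_nonneg_right (h1.trans_eq c1eq) (hgnn τ hτ0)
    have splitg : (∫ τ in (0:ℝ)..(t/2), g τ) =
        (∫ τ in (0:ℝ)..1, g τ) + ∫ τ in (1:ℝ)..(t/2), g τ :=
      (intervalIntegral.integral_add_adjacent_intervals
        (hgint 0 1 le_rfl zero_le_one (by linarith)) (hgint 1 (t/2) zero_le_one ht2 htt)).symm
    have bg1 : (∫ τ in (0:ℝ)..1, g τ) ≤ 1 / (1 - θ) := by
      have h1 : (∫ τ in (0:ℝ)..1, g τ) ≤ ∫ τ in (0:ℝ)..1, τ ^ (-θ) := by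
        refine intervalIntegral.integral_mono_on zero_le_one
          (hgint 0 1 le_rfl zero_le_one (by linarith))
          (intervalIntegral.intervalIntegrable_rpow' (by linarith)) ?_
        intro τ hτ
        have h2 : (1 + τ) ^ (θ - r2) ≤ 1 :=
          Real.rpow_le_one_of_one_le_of_nonpos (by linarith [hτ.1]) (by linarith)
        have h3 : (0:ℝ) ≤ τ ^ (-θ) := Real.rpow_nonneg hτ.1 _
        calc g τ ≤ τ ^ (-θ) * 1 := mul_le_mul_of_nonneg_left h2 h3
          _ = τ ^ (-θ) := mul_one _
      have h4 : (∫ τ in (0:ℝ)..1, τ ^ (-θ)) =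
          ((1:ℝ) ^ (-θ+1) - (0:ℝ) ^ (-θ+1)) / (-θ + 1) :=
        integral_rpow (Or.inl (by linarith))
      rw [h4, Real.one_rpow, Real.zero_rpow (by linarith : -θ + 1 ≠ 0)] at h1
      calc (∫ τ in (0:ℝ)..1, g τ) ≤ (1 - 0) / (-θ + 1) := h1
        _ = 1 / (1 - θ) := by rw [sub_zero, show -θ + 1 = 1 - θ by ring]
    have bg2 : (∫ τ in (1:ℝ)..(t/2), g τ) ≤ 2 / (r2 - 1) := by
      have hcont : ContinuousOn (fun τ : ℝ => (2:ℝ) ^ θ * (1 + τ) ^ (-r2))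
          (Set.uIcc 1 (t/2)) := by
        apply ContinuousOn.mul continuousOn_const
        apply ContinuousOn.rpow_const (by fun_prop)
        intro x hx
        rw [Set.uIcc_of_le ht2] at hx
        left; intro h; linarith [hx.1]
      have hrint : IntervalIntegrable (fun τ : ℝ => (2:ℝ) ^ θ * (1 + τ) ^ (-r2))
          volume 1 (t/2) := hcont.intervalIntegrable
      have h1 : (∫ τ in (1:ℝ)..(t/2), g τ) ≤
          ∫ τ in (1:ℝ)..(t/2), (2:ℝ) ^ θ * (1 + τ) ^ (-r2) := by
        refine intervalIntegral.integral_mono_on ht2 (hgint 1 (t/2) zero_le_one ht2 htt) hrint ?_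
        intro τ hτ
        obtain ⟨hτ1, _⟩ := hτ
        have ha : τ ^ (-θ) ≤ ((1 + τ)/2) ^ (-θ) :=
          Real.rpow_le_rpow_of_nonpos (by linarith) (by linarith) (by linarith)
        have hb2 : ((1 + τ)/2) ^ (-θ) = 2 ^ θ * (1 + τ) ^ (-θ) := by
          rw [div_rpow_eq (-θ) (by linarith) (by norm_num : (0:ℝ) < 2), neg_neg]
        have hcn : (0:ℝ) ≤ (1 + τ) ^ (θ - r2) := Real.rpow_nonneg (by linarith) _
        calc g τ ≤ (2 ^ θ * (1 + τ) ^ (-θ)) * (1 + τ) ^ (θ - r2) :=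
              mul_le_mul_of_nonneg_right (ha.trans_eq hb2) hcn
          _ = 2 ^ θ * ((1 + τ) ^ (-θ) * (1 + τ) ^ (θ - r2)) := by ring
          _ = 2 ^ θ * (1 + τ) ^ (-r2) := by
              rw [← Real.rpow_add (by linarith : (0:ℝ) < 1 + τ),
                show -θ + (θ - r2) = -r2 by ring]
      have h5 : (∫ τ in (1:ℝ)..(t/2), (1 + τ) ^ (-r2)) =
          ((1 + t/2) ^ (-r2+1) - (2:ℝ) ^ (-r2+1)) / (-r2+1) := by
        have hcl := intervalIntegral.integral_comp_add_left (a := (1:ℝ)) (b := t/2)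
          (fun u : ℝ => u ^ (-r2)) 1
        rw [hcl, show (1:ℝ) + 1 = 2 by norm_num, show (1:ℝ) + t/2 = 1 + t/2 by ring]
        exact integral_rpow (Or.inr ⟨by intro h; rw [neg_eq_iff_eq_neg] at h; linarith [h],
          Set.notMem_uIcc_of_lt (by norm_num) (by linarith)⟩)
      have hA : (1 + t/2) ^ (-r2+1) ≤ (2:ℝ) ^ (-r2+1) :=
        Real.rpow_le_rpow_of_nonpos (by norm_num) (by linarith) (by linarith)
      have hA0 : (0:ℝ) ≤ (1 + t/2) ^ (-r2+1) := Real.rpow_nonneg (by linarith) _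
      have hB : (2:ℝ) ^ (-r2+1) ≤ 1 :=
        Real.rpow_le_one_of_one_le_of_nonpos one_le_two (by linarith)
      have h6 : ((1 + t/2) ^ (-r2+1) - (2:ℝ) ^ (-r2+1)) / (-r2+1) ≤ 1 / (r2-1) := by
        exact div_neg_le hr21 (by ring) hA0 hB
      have h7 : (∫ τ in (1:ℝ)..(t/2), (2:ℝ) ^ θ * (1 + τ) ^ (-r2)) ≤ 2 / (r2-1) := by
        rw [intervalIntegral.integral_const_mul, h5]
        have h2θ : (2:ℝ) ^ θ ≤ 2 := by
          calc (2:ℝ) ^ θ ≤ (2:ℝ) ^ (1:ℝ) :=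
                Real.rpow_le_rpow_of_exponent_le one_le_two (by linarith)
            _ = 2 := Real.rpow_one 2
        have h2θ0 : (0:ℝ) ≤ (2:ℝ) ^ θ := Real.rpow_nonneg (by norm_num) _
        calc (2:ℝ) ^ θ * (((1 + t/2) ^ (-r2+1) - (2:ℝ) ^ (-r2+1)) / (-r2+1))
            ≤ (2:ℝ) ^ θ * (1 / (r2-1)) := mul_le_mul_of_nonneg_left h6 h2θ0
          _ ≤ 2 * (1 / (r2-1)) := mul_le_mul_of_nonneg_right h2θ (by positivity)
          _ = 2 / (r2-1) := by ring
      exact h1.trans h7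
    have part1 : (∫ τ in (0:ℝ)..(t/2), f τ) ≤
        2 ^ r1 * (1 + t) ^ (-r1) * (1 / (1 - θ) + 2 / (r2 - 1)) := by
      refine key1.trans ?_
      have hgsum : (∫ τ in (0:ℝ)..(t/2), g τ) ≤ 1 / (1 - θ) + 2 / (r2 - 1) := by
        rw [splitg]; linarith
      exact mul_le_mul_of_nonneg_left hgsum (by positivity)
    -- Part 2 : integral over [t/2, t]
    set c2 : ℝ := (1 + t) ^ (r2 - r1) * (t/2) ^ (-θ) * (1 + t/2) ^ (θ - r2) with hc2def
    have hc2nn : (0:ℝ) ≤ c2 := by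
      rw [hc2def]
      have := Real.rpow_nonneg h1t.le (r2 - r1)
      have := Real.rpow_nonneg ht0.le (-θ)
      have := Real.rpow_nonneg (show (0:ℝ) ≤ 1 + t/2 by linarith) (θ - r2)
      positivity
    have hcont2 : ContinuousOn (fun τ : ℝ => c2 * (1 + t - τ) ^ (-r2)) (Set.uIcc (t/2) t) := by
      apply ContinuousOn.mul continuousOn_const
      apply ContinuousOn.rpow_const (by fun_prop)
      intro x hx
      rw [Set.uIcc_of_le htt] at hx
      left; intro h; linarith [hx.2]
    have key2 : (∫ τ in (t/2)..t, f τ) ≤ c2 * ∫ τ in (t/2)..t, (1 + t - τ) ^ (-r2) := by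
      rw [← intervalIntegral.integral_const_mul]
      refine intervalIntegral.integral_mono_on htt hi2 hcont2.intervalIntegrable ?_
      intro τ hτ
      obtain ⟨hτa, hτb⟩ := hτ
      have hbpos : (0:ℝ) < 1 + t - τ := by linarith
      have ha1 : (1 + t - τ) ^ (-r1) = (1 + t - τ) ^ (r2 - r1) * (1 + t - τ) ^ (-r2) := by
        rw [← Real.rpow_add hbpos, show r2 - r1 + -r2 = -r1 by ring]
      have ha2 : (1 + t - τ) ^ (r2 - r1) ≤ (1 + t) ^ (r2 - r1) :=
        Real.rpow_le_rpow (by linarith) (by linarith) (by linarith)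
      have hb : τ ^ (-θ) ≤ (t/2) ^ (-θ) :=
        Real.rpow_le_rpow_of_nonpos ht0 hτa (by linarith)
      have hc : (1 + τ) ^ (θ - r2) ≤ (1 + t/2) ^ (θ - r2) :=
        Real.rpow_le_rpow_of_nonpos (by linarith) (by linarith) (by linarith)
      have n1 : (0:ℝ) ≤ (1 + t - τ) ^ (-r2) := Real.rpow_nonneg hbpos.le _
      have n2 : (0:ℝ) ≤ τ ^ (-θ) := Real.rpow_nonneg (by linarith) _
      have n3 : (0:ℝ) ≤ (1 + τ) ^ (θ - r2) := Real.rpow_nonneg (by linarith) _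
      have n4 : (0:ℝ) ≤ (1 + t) ^ (r2 - r1) := Real.rpow_nonneg h1t.le _
      have n5 : (0:ℝ) ≤ (t/2) ^ (-θ) := Real.rpow_nonneg ht0.le _
      calc f τ = ((1 + t - τ) ^ (r2 - r1) * (1 + t - τ) ^ (-r2)) * τ ^ (-θ) *
            (1 + τ) ^ (θ - r2) := by simp only [hfdef]; rw [ha1]
        _ ≤ ((1 + t) ^ (r2 - r1) * (1 + t - τ) ^ (-r2)) * (t/2) ^ (-θ) *
            (1 + t/2) ^ (θ - r2) := by
            refine mul_le_mul (mul_le_mul (mul_le_mul_of_nonneg_right ha2 n1) hb n2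
              (by positivity)) hc n3 (by positivity)
        _ = c2 * (1 + t - τ) ^ (-r2) := by rw [hc2def]; ring
    have hval2 : (∫ τ in (t/2)..t, (1 + t - τ) ^ (-r2)) =
        ((1 + t/2) ^ (-r2+1) - (1:ℝ) ^ (-r2+1)) / (-r2+1) := by
      have hcs := intervalIntegral.integral_comp_sub_left (a := t/2) (b := t)
        (fun u : ℝ => u ^ (-r2)) (1 + t)
      rw [hcs, show (1:ℝ) + t - t = 1 by ring, show (1:ℝ) + t - t/2 = 1 + t/2 by ring]
      exact integral_rpow (Or.inr ⟨by intro h; rw [neg_eq_iff_eq_neg] at h; linarith [h],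
        Set.notMem_uIcc_of_lt (by norm_num) (by linarith)⟩)
    have hval2le : (∫ τ in (t/2)..t, (1 + t - τ) ^ (-r2)) ≤ 1 / (r2 - 1) := by
      rw [hval2, Real.one_rpow]
      have hA0 : (0:ℝ) ≤ (1 + t/2) ^ (-r2+1) := Real.rpow_nonneg (by linarith) _
      have hA1 : (1 + t/2) ^ (-r2+1) ≤ 1 :=
        Real.rpow_le_one_of_one_le_of_nonpos (by linarith) (by linarith)
      exact div_neg_le hr21 (by ring) hA0 le_rfl
    have part2pre : (∫ τ in (t/2)..t, f τ) ≤ c2 * (1 / (r2 - 1)) :=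
      key2.trans (mul_le_mul_of_nonneg_left hval2le hc2nn)
    -- bound c2
    have u1 : (t/2) ^ (-θ) ≤ 3 ^ θ * (1 + t) ^ (-θ) := by
      have hle : ((1 + t)/3 : ℝ) ≤ t/2 := by linarith
      have h := Real.rpow_le_rpow_of_nonpos (by linarith : (0:ℝ) < (1 + t)/3) hle
        (by linarith : -θ ≤ 0)
      rwa [div_rpow_eq (-θ) h1t.le (by norm_num : (0:ℝ) < 3), neg_neg] at h
    have u2 : (1 + t/2) ^ (θ - r2) ≤ 2 ^ (r2 - θ) * (1 + t) ^ (θ - r2) := by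
      have hle : ((1 + t)/2 : ℝ) ≤ 1 + t/2 := by linarith
      have h := Real.rpow_le_rpow_of_nonpos (by linarith : (0:ℝ) < (1 + t)/2) hle
        (by linarith : θ - r2 ≤ 0)
      rwa [div_rpow_eq (θ - r2) h1t.le (by norm_num : (0:ℝ) < 2),
        show -(θ - r2) = r2 - θ by ring] at h
    have u4 : (1 + t) ^ (r2 - r1) * (1 + t) ^ (-θ) * (1 + t) ^ (θ - r2) = (1 + t) ^ (-r1) := by
      rw [← Real.rpow_add h1t, ← Real.rpow_add h1t, show r2 - r1 + -θ + (θ - r2) = -r1 by ring]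
    have n4 : (0:ℝ) ≤ (1 + t) ^ (r2 - r1) := Real.rpow_nonneg h1t.le _
    have n6 : (0:ℝ) ≤ (1 + t) ^ (-θ) := Real.rpow_nonneg h1t.le _
    have n7 : (0:ℝ) ≤ (1 + t) ^ (θ - r2) := Real.rpow_nonneg h1t.le _
    have n8 : (0:ℝ) ≤ (3:ℝ) ^ θ := Real.rpow_nonneg (by norm_num) _
    have n9 : (0:ℝ) ≤ (2:ℝ) ^ (r2 - θ) := Real.rpow_nonneg (by norm_num) _
    have u3 : c2 ≤ 3 ^ θ * 2 ^ (r2 - θ) * (1 + t) ^ (-r1) := by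
      rw [hc2def, ← u4]
      calc (1 + t) ^ (r2 - r1) * (t/2) ^ (-θ) * (1 + t/2) ^ (θ - r2)
          ≤ (1 + t) ^ (r2 - r1) * (3 ^ θ * (1 + t) ^ (-θ)) *
            (2 ^ (r2 - θ) * (1 + t) ^ (θ - r2)) := by
            refine mul_le_mul (mul_le_mul_of_nonneg_left u1 n4) u2
              (Real.rpow_nonneg (by linarith) _) (by positivity)
        _ = 3 ^ θ * 2 ^ (r2 - θ) * ((1 + t) ^ (r2 - r1) * (1 + t) ^ (-θ) *
            (1 + t) ^ (θ - r2)) := by ring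
    have u5 : (3:ℝ) ^ θ ≤ 3 := by
      calc (3:ℝ) ^ θ ≤ (3:ℝ) ^ (1:ℝ) :=
            Real.rpow_le_rpow_of_exponent_le (by norm_num) (by linarith)
        _ = 3 := Real.rpow_one 3
    have u6 : (2:ℝ) ^ (r2 - θ) ≤ 2 ^ r2 :=
      Real.rpow_le_rpow_of_exponent_le one_le_two (by linarith)
    have u7 : c2 ≤ 3 * 2 ^ r2 * (1 + t) ^ (-r1) := by
      have h35 : (3:ℝ) ^ θ * 2 ^ (r2 - θ) ≤ 3 * 2 ^ r2 :=
        mul_le_mul u5 u6 n9 (by norm_num)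
      calc c2 ≤ 3 ^ θ * 2 ^ (r2 - θ) * (1 + t) ^ (-r1) := u3
        _ ≤ 3 * 2 ^ r2 * (1 + t) ^ (-r1) := mul_le_mul_of_nonneg_right h35 hpos.le
    have part2 : (∫ τ in (t/2)..t, f τ) ≤ 3 * 2 ^ r2 * (1 + t) ^ (-r1) * (1 / (r2 - 1)) :=
      part2pre.trans (mul_le_mul_of_nonneg_right u7 (by positivity))
    -- combine
    have h2r2 : (0:ℝ) ≤ (2:ℝ) ^ r2 := Real.rpow_nonneg (by norm_num) _
    have hq : (0:ℝ) ≤ 3 * 2 ^ r2 * (1 + t) ^ (-r1) * (1 / (r2 - 1)) := by positivity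
    have hq1 : (0:ℝ) ≤ 3 ^ r1 * (2 / (1 - θ)) * (1 + t) ^ (-r1) := mul_nonneg hC1 hpos.le
    have e5 : (2:ℝ) ^ r1 * (1 / (1 - θ) + 2 / (r2 - 1)) * (1 + t) ^ (-r1) =
        2 ^ r1 * (1 + t) ^ (-r1) * (1 / (1 - θ) + 2 / (r2 - 1)) := by ring
    have e6 : 6 * (2:ℝ) ^ r2 / (r2 - 1) * (1 + t) ^ (-r1) =
        2 * (3 * 2 ^ r2 * (1 + t) ^ (-r1) * (1 / (r2 - 1))) := by ring
    nlinarith [part1, part2, e5, e6, hq, hq1]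
end

section
/- Let ν > 0 and k > 0. There exist constants C > 0 and θ > 0 depending only on ν (not on k) such that any solution (a, v) : [0, ∞) → ℝ² of a'(t) = k v(t), v'(t) = −νk v(t) − k a(t) satisfies |a(t)| + |v(t)| ≤ C e^{−θ k t} (|a(0)| + |v(0)|) for all t ≥ 0. -/
/-!
The energy `a² + v²` dissipates only through the damping, `d/dt (a² + v²) = -2νk v²`, which does
not see `a`. Tilting it by a cross term, `L = a² + v² + ε a v` with `ε = ν / (1 + ν²)`, gives
`dL/dt = -k (ε a² + εν a v + (2ν - ε) v²) ≤ -(ε/4) k L`, where the last step is the positive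
semidefiniteness of a quadratic form whose coefficients depend on `ν` alone. Grönwall then yields
`L(t) ≤ e^{-εkt/4} L(0)`, and `L` is comparable to `(|a| + |v|)²`.
-/

open Real Set

theorem le_mul_exp_of_hasDerivWithinAt_le_mul {f f' : ℝ → ℝ} {K : ℝ}
    (hf : ∀ s, 0 ≤ s → HasDerivWithinAt f (f' s) (Ici 0) s)
    (bound : ∀ s, 0 ≤ s → f' s ≤ K * f s) {t : ℝ} (ht : 0 ≤ t) :
    f t ≤ f 0 * exp (K * t) := by
  have hcont : ContinuousOn f (Icc 0 t) := fun s hs =>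
    (hf s hs.1).continuousWithinAt.mono Icc_subset_Ici_self
  have := le_gronwallBound_of_liminf_deriv_right_le (K := K) (ε := 0) hcont
    (fun s hs _ hr => ((hf s hs.1).mono (Ici_subset_Ici.2 hs.1)).liminf_right_slope_le hr)
    le_rfl (fun s hs => by simpa using bound s hs.1) t ⟨ht, le_rfl⟩
  rwa [sub_zero, gronwallBound_ε0] at this

theorem quadratic_form_nonneg {K : Type*} [Field K] [LinearOrder K] [IsStrictOrderedRing K]
    {p q r : K} (hp : 0 ≤ p) (hr : 0 ≤ r) (hq : q ^ 2 ≤ 4 * p * r) (x y : K) :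
    0 ≤ p * x ^ 2 + q * x * y + r * y ^ 2 := by
  rcases hp.eq_or_lt with rfl | hp
  · obtain rfl : q = 0 :=
      pow_eq_zero_iff two_ne_zero |>.1 <| le_antisymm (by simpa using hq) (sq_nonneg q)
    simp only [zero_mul, zero_add]
    positivity
  · -- `4p (p x² + q x y + r y²) = (2p x + q y)² + (4pr - q²) y²`
    refine nonneg_of_mul_nonneg_right (a := 4 * p) ?_ (by positivity)
    nlinarith [sq_nonneg (2 * p * x + q * y), mul_nonneg (sub_nonneg.2 hq) (sq_nonneg y)]

def lyapunov (ε a v : ℝ) : ℝ := a ^ 2 + v ^ 2 + ε * a * v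

section
variable {ε : ℝ}

theorem abs_mul_mul_le_abs_mul_abs (hε : |ε| ≤ 1) (a v : ℝ) : |ε * a * v| ≤ |a| * |v| := by
  rw [mul_assoc, abs_mul, abs_mul]
  exact mul_le_of_le_one_left (by positivity) hε

theorem sq_abs_add_abs_le_lyapunov (hε : |ε| ≤ 1) (a v : ℝ) :
    (|a| + |v|) ^ 2 ≤ 4 * lyapunov ε a v := by
  have h := (abs_le.1 (abs_mul_mul_le_abs_mul_abs hε a v)).1
  unfold lyapunov
  nlinarith [sq_abs a, sq_abs v, sq_nonneg (|a| - |v|)]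

theorem lyapunov_le_sq_abs_add_abs (hε : |ε| ≤ 1) (a v : ℝ) :
    lyapunov ε a v ≤ 2 * (|a| + |v|) ^ 2 := by
  have h := (abs_le.1 (abs_mul_mul_le_abs_mul_abs hε a v)).2
  unfold lyapunov
  nlinarith [sq_abs a, sq_abs v, abs_nonneg a, abs_nonneg v]

theorem hasDerivWithinAt_lyapunov {ν k : ℝ} {a v : ℝ → ℝ} {s : Set ℝ} {t : ℝ}
    (ha : HasDerivWithinAt a (k * v t) s t)
    (hv : HasDerivWithinAt v (-ν * k * v t - k * a t) s t) :
    HasDerivWithinAt (fun t => lyapunov ε (a t) (v t))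
      (-k * (ε * a t ^ 2 + ε * ν * a t * v t + (2 * ν - ε) * v t ^ 2)) s t := by
  refine (((ha.fun_pow 2).add (hv.fun_pow 2)).add ((ha.const_mul ε).fun_mul hv)).congr_deriv ?_
  push_cast
  ring

theorem lyapunov_le_dissipation {ν : ℝ} (hε : 0 ≤ ε) (hεν : ε * (1 + ν ^ 2) ≤ ν) (a v : ℝ) :
    ε / 4 * lyapunov ε a v ≤ ε * a ^ 2 + ε * ν * a * v + (2 * ν - ε) * v ^ 2 := by
  have hle : ε ≤ ν := by nlinarith [mul_nonneg hε (sq_nonneg ν)]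
  -- discriminant of the difference of the two sides, a form with coefficients `p, q, r` below
  have hdisc : (ε * ν - ε ^ 2 / 4) ^ 2 ≤ 4 * (3 * ε / 4) * (2 * ν - 5 * ε / 4) := by
    nlinarith [mul_nonneg hε hε, mul_nonneg (mul_nonneg hε hε) (sub_nonneg.2 hle)]
  have := quadratic_form_nonneg (by positivity) (by linarith) hdisc a v
  unfold lyapunov
  linarith

end

theorem linearized_system_uniform_decay (ν : ℝ) (hν : 0 < ν) :
    ∃ C : ℝ, 0 < C ∧ ∃ θ : ℝ, 0 < θ ∧
      ∀ k : ℝ, 0 < k → ∀ a v : ℝ → ℝ,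
        (∀ t : ℝ, 0 ≤ t → HasDerivWithinAt a (k * v t) (Set.Ici 0) t) →
        (∀ t : ℝ, 0 ≤ t →
          HasDerivWithinAt v (-ν * k * v t - k * a t) (Set.Ici 0) t) →
        ∀ t : ℝ, 0 ≤ t →
          |a t| + |v t| ≤ C * Real.exp (-θ * k * t) * (|a 0| + |v 0|) := by
  set ε := ν / (1 + ν ^ 2)
  have hε : 0 < ε := by positivity
  have hεν : ε * (1 + ν ^ 2) ≤ ν := (div_mul_cancel₀ ν (by positivity)).le
  have hε1 : |ε| ≤ 1 := by
    rw [abs_of_pos hε, div_le_one (by positivity)]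
    nlinarith [sq_nonneg (ν - 1)]
  refine ⟨3, by norm_num, ε / 8, by positivity, fun k hk a v ha hv t ht => ?_⟩
  have hdecay : lyapunov ε (a t) (v t) ≤ lyapunov ε (a 0) (v 0) * exp (-(ε / 4) * k * t) := by
    refine le_mul_exp_of_hasDerivWithinAt_le_mul
      (fun s hs => hasDerivWithinAt_lyapunov (ε := ε) (ha s hs) (hv s hs)) (fun s _ => ?_) ht
    nlinarith [lyapunov_le_dissipation hε.le hεν (a s) (v s)]
  have hexp : exp (-(ε / 4) * k * t) = exp (-(ε / 8) * k * t) ^ 2 := by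
    rw [← exp_nat_mul]; ring_nf
  refine (pow_le_pow_iff_left₀ (by positivity) (by positivity) two_ne_zero).1 ?_
  calc (|a t| + |v t|) ^ 2 ≤ 4 * lyapunov ε (a t) (v t) := sq_abs_add_abs_le_lyapunov hε1 _ _
    _ ≤ 4 * (2 * (|a 0| + |v 0|) ^ 2 * exp (-(ε / 4) * k * t)) := by
      gcongr
      exact hdecay.trans (by gcongr; exact lyapunov_le_sq_abs_add_abs hε1 _ _)
    _ ≤ (3 * exp (-(ε / 8) * k * t) * (|a 0| + |v 0|)) ^ 2 := by
      rw [hexp]; nlinarith [sq_nonneg (exp (-(ε / 8) * k * t) * (|a 0| + |v 0|))]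
end
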